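/- In the 7-dimensional Lie algebra L_{10}(a) (nilradical g_{5,2}) with the brackets of g_{5,2} together with ad_X = diag(0,1,a,1,a) and ad_Y = diag(0,0,1,0,1) + E_{35} on the basis x_1,...,x_5 (so [Y,x_3]=x_3+x_5 and [Y,x_4]=0), and with [X,Y]=0: for a ≠ 0, L_{10}(a) is isomorphic to L_{10}(1/a). -/

import Mathlib

/-- Bracket table of the 7-dimensional real Lie algebra `L₁₀(a)` with nilradical
`g_{5,2}`: basis `x₁,…,x₅,X,Y` (indices `0,…,4,5,6`), nonzero brackets
`[x₁,x₂]=x₄`, `[x₁,x₃]=x₅`, `ad X = diag(0,1,a,1,a)`,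
`ad Y = diag(0,0,1,0,1) + E₃₅` (i.e. `[Y,x₃]=x₃+x₅`, `[Y,x₅]=x₅`), `[X,Y]=0`. -/
def L10Bracket {L : Type*} [AddCommGroup L] [Module ℝ L] (a : ℝ) (b : Fin 7 → L)
    (i j : Fin 7) : L :=
  match i.val, j.val with
  | 0, 1 => b 3
  | 1, 0 => -b 3
  | 0, 2 => b 4
  | 2, 0 => -b 4
  | 5, 1 => b 1
  | 1, 5 => -b 1
  | 5, 2 => a • b 2
  | 2, 5 => -(a • b 2)
  | 5, 3 => b 3
  | 3, 5 => -b 3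
  | 5, 4 => a • b 4
  | 4, 5 => -(a • b 4)
  | 6, 2 => b 2 + b 4
  | 2, 6 => -(b 2 + b 4)
  | 6, 4 => b 4
  | 4, 6 => -b 4
  | _, _ => 0

/-- For `a ≠ 0`, the Lie algebra `L₁₀(a)` is isomorphic to `L₁₀(1/a)`. -/
theorem L10_iso_inv (a : ℝ) (ha : a ≠ 0)
    (L₁ : Type*) [LieRing L₁] [LieAlgebra ℝ L₁] (b₁ : Module.Basis (Fin 7) ℝ L₁)
    (L₂ : Type*) [LieRing L₂] [LieAlgebra ℝ L₂] (b₂ : Module.Basis (Fin 7) ℝ L₂)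
    (h₁ : ∀ i j : Fin 7, ⁅b₁ i, b₁ j⁆ = L10Bracket a b₁ i j)
    (h₂ : ∀ i j : Fin 7, ⁅b₂ i, b₂ j⁆ = L10Bracket a⁻¹ b₂ i j) :
    Nonempty (L₁ ≃ₗ⁅ℝ⁆ L₂) := by
  classical
  set v : Fin 7 → L₂ :=
    ![a⁻¹ • b₂ 0, a • b₂ 2, a • b₂ 1, b₂ 4, b₂ 3, a • b₂ 5,
      b₂ 5 - a⁻¹ • b₂ 6 + a⁻¹ • b₂ 0] with hv
  set w : Fin 7 → L₁ :=
    ![a • b₁ 0, a⁻¹ • b₁ 2, a⁻¹ • b₁ 1, b₁ 4, b₁ 3, a⁻¹ • b₁ 5,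
      b₁ 5 + a • b₁ 0 - a • b₁ 6] with hw
  set T : L₁ →ₗ[ℝ] L₂ := b₁.constr ℝ v with hT
  set S : L₂ →ₗ[ℝ] L₁ := b₂.constr ℝ w with hS
  have hTb : ∀ i, T (b₁ i) = v i := fun i => b₁.constr_basis ℝ v i
  have hSb : ∀ i, S (b₂ i) = w i := fun i => b₂.constr_basis ℝ w i
  have t0 : T (b₁ 0) = a⁻¹ • b₂ 0 := hTb 0
  have t1 : T (b₁ 1) = a • b₂ 2 := hTb 1
  have t2 : T (b₁ 2) = a • b₂ 1 := hTb 2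
  have t3 : T (b₁ 3) = b₂ 4 := hTb 3
  have t4 : T (b₁ 4) = b₂ 3 := hTb 4
  have t5 : T (b₁ 5) = a • b₂ 5 := hTb 5
  have t6 : T (b₁ 6) = b₂ 5 - a⁻¹ • b₂ 6 + a⁻¹ • b₂ 0 := hTb 6
  have s0 : S (b₂ 0) = a • b₁ 0 := hSb 0
  have s1 : S (b₂ 1) = a⁻¹ • b₁ 2 := hSb 1
  have s2 : S (b₂ 2) = a⁻¹ • b₁ 1 := hSb 2
  have s3 : S (b₂ 3) = b₁ 4 := hSb 3
  have s4 : S (b₂ 4) = b₁ 3 := hSb 4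
  have s5 : S (b₂ 5) = a⁻¹ • b₁ 5 := hSb 5
  have s6 : S (b₂ 6) = b₁ 5 + a • b₁ 0 - a • b₁ 6 := hSb 6
  have hST : S.comp T = LinearMap.id := by
    apply b₁.ext
    intro i
    fin_cases i <;>
      · simp only [Fin.zero_eta, Fin.mk_one, Fin.reduceFinMk, LinearMap.comp_apply, LinearMap.id_apply, t0, t1, t2, t3, t4, t5, t6,
          map_smul, map_add, map_sub, s0, s1, s2, s3, s4, s5, s6]
        try match_scalars <;> field_simp <;> ring
  have hTS : T.comp S = LinearMap.id := by
    apply b₂.ext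
    intro i
    fin_cases i <;>
      · simp only [Fin.zero_eta, Fin.mk_one, Fin.reduceFinMk, LinearMap.comp_apply, LinearMap.id_apply, t0, t1, t2, t3, t4, t5, t6,
          map_smul, map_add, map_sub, s0, s1, s2, s3, s4, s5, s6]
        try match_scalars <;> field_simp <;> ring
  have key : ∀ i j : Fin 7, ⁅T (b₁ i), T (b₁ j)⁆ = T ⁅b₁ i, b₁ j⁆ := by
    intro i j
    fin_cases i <;> fin_cases j <;>
      · simp only [Fin.zero_eta, Fin.mk_one, Fin.reduceFinMk]
        rw [h₁]
        simp only [L10Bracket, t0, t1, t2, t3, t4, t5, t6, map_add, map_sub, map_smul,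
          map_neg, map_zero, lie_smul, smul_lie, lie_add, add_lie, sub_lie, lie_sub,
          lie_neg, neg_lie, lie_self]
        try simp only [h₂, L10Bracket, Fin.coe_ofNat_eq_mod, Nat.reduceMod, Fin.isValue, t0, t1, t2, t3, t4, t5, t6, map_neg, map_add, map_sub, map_smul]
        try match_scalars <;> field_simp <;> ring
  have hmain : ∀ x y : L₁, ⁅T x, T y⁆ = T ⁅x, y⁆ := by
    let B1 : L₁ →ₗ[ℝ] L₁ →ₗ[ℝ] L₂ :=
      LinearMap.mk₂ ℝ (fun x y : L₁ => ⁅T x, T y⁆)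
        (by intros; simp [add_lie]) (by intros; simp [smul_lie])
        (by intros; simp [lie_add]) (by intros; simp [lie_smul])
    let B2 : L₁ →ₗ[ℝ] L₁ →ₗ[ℝ] L₂ :=
      LinearMap.mk₂ ℝ (fun x y : L₁ => T ⁅x, y⁆)
        (by intros; simp [add_lie]) (by intros; simp [smul_lie])
        (by intros; simp [lie_add]) (by intros; simp [lie_smul])
    have h : B1 = B2 := LinearMap.ext_basis b₁ b₁ (fun i j => by
      simpa [B1, B2] using key i j)
    intro x y
    have := LinearMap.congr_fun (LinearMap.congr_fun h x) y
    simpa [B1, B2] using this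
  exact ⟨{ toLinearMap := T,
           map_lie' := fun {x y} => (hmain x y).symm,
           invFun := S,
           left_inv := fun x => LinearMap.congr_fun hST x,
           right_inv := fun y => LinearMap.congr_fun hTS y }⟩
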